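/- arXiv:2107.14031 — 4 statements merged into one kernel-verified Lean document; each statement's English description precedes it below -/
import Mathlib

section
/- Given data of an adjunction in the 2-category of doctrines (P, Q, L, λ, R, ρ, η, ε), define for each object X of C the map ◻_X : Q(L X) → Q(L X) by ◻_X γ = λ_X(P(η_X)(ρ_{L X}(γ))). Then ◻ is an interior operator on the doctrine L.op ⋙ Q : Cᵒᵖ ⥤ PartOrd; that is: (a) naturality: for every arrow f : X' ⟶ X in C and γ ∈ Q(L X), Q(L f)(◻_X γ) = ◻_{X'}(Q(L f)(γ)); (b) ◻_X γ ≤ γ for all γ ∈ Q(L X); and (c) ◻_X γ ≤ ◻_X(◻_X γ) for all γ ∈ Q(L X). -/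
open CategoryTheory Opposite

/-- Apply a morphism of `PartOrd` to an element (morphisms of `PartOrd` are order homs). -/
def ap {X Y : PartOrd} (f : X ⟶ Y) : X →o Y := f.hom

/-
The operator is `λ_X ∘ P(η_X) ∘ ρ_{L X}`, a composite of natural maps, so it is natural as soon as
`η` is. By naturality of `λ` it equals `Q(L η_X) ∘ λ_{R L X} ∘ ρ_{L X}`, which the counit
condition bounds by `Q(L η_X) ∘ Q(ε_{L X}) = id` (triangle identity): it is deflationary.
Applying `λ_X` to the unit condition at `P(η_X)(ρ_{L X} γ)` gives `◻ γ ≤ ◻ ◻ γ`.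
-/

section PartOrdValued

variable {J : Type*} [Category J]

lemma ap_comp {X Y Z : PartOrd} (f : X ⟶ Y) (g : Y ⟶ Z) (x : X) :
    ap (f ≫ g) x = ap g (ap f x) := rfl

lemma ap_map_comp (F : J ⥤ PartOrd) {i j k : J} (f : i ⟶ j) (g : j ⟶ k) (x : F.obj i) :
    ap (F.map (f ≫ g)) x = ap (F.map g) (ap (F.map f) x) := by
  rw [F.map_comp, ap_comp]

lemma ap_naturality {F G : J ⥤ PartOrd} (τ : F ⟶ G) {i j : J} (f : i ⟶ j) (x : F.obj i) :
    ap (G.map f) (ap (τ.app i) x) = ap (τ.app j) (ap (F.map f) x) := by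
  rw [← ap_comp, ← τ.naturality, ap_comp]

end PartOrdValued

namespace DoctrineAdjunction

variable {C D : Type*} [Category C] [Category D]
  {P : Cᵒᵖ ⥤ PartOrd} {Q : Dᵒᵖ ⥤ PartOrd} {L : C ⥤ D} {R : D ⥤ C}

def box (adj : L ⊣ R) (lam : P ⟶ L.op ⋙ Q) (rho : Q ⟶ R.op ⋙ P) (X : C) :
    Q.obj (op (L.obj X)) →o Q.obj (op (L.obj X)) :=
  (ap (lam.app (op X))).comp ((ap (P.map (adj.unit.app X).op)).comp (ap (rho.app (op (L.obj X)))))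

variable (adj : L ⊣ R) (lam : P ⟶ L.op ⋙ Q) (rho : Q ⟶ R.op ⋙ P)

lemma map_box {X' X : C} (f : X' ⟶ X) (γ : Q.obj (op (L.obj X))) :
    ap (Q.map (L.map f).op) (box adj lam rho X γ) =
      box adj lam rho X' (ap (Q.map (L.map f).op) γ) := by
  have hη : (adj.unit.app X).op ≫ f.op = (R.map (L.map f)).op ≫ (adj.unit.app X').op := by
    rw [← op_comp, ← op_comp, ← Functor.comp_map, ← adj.unit.naturality]
    rfl
  calc ap (Q.map (L.map f).op) (box adj lam rho X γ)
      = ap (lam.app (op X'))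
          (ap (P.map f.op) (ap (P.map (adj.unit.app X).op) (ap (rho.app (op (L.obj X))) γ))) :=
        ap_naturality lam f.op _
    _ = ap (lam.app (op X')) (ap (P.map (adj.unit.app X').op)
          (ap (P.map (R.map (L.map f)).op) (ap (rho.app (op (L.obj X))) γ))) := by
        rw [← ap_map_comp, hη, ap_map_comp]
    _ = box adj lam rho X' (ap (Q.map (L.map f).op) γ) :=
        congrArg (fun β => ap (lam.app (op X')) (ap (P.map (adj.unit.app X').op) β))
          (ap_naturality rho (L.map f).op γ)

lemma box_eq_map_unit_counit (X : C) (γ : Q.obj (op (L.obj X))) :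
    box adj lam rho X γ =
      ap (Q.map (L.map (adj.unit.app X)).op)
        (ap (lam.app (op (R.obj (L.obj X)))) (ap (rho.app (op (L.obj X))) γ)) :=
  (ap_naturality lam (adj.unit.app X).op _).symm

lemma map_unit_map_counit (X : C) (γ : Q.obj (op (L.obj X))) :
    ap (Q.map (L.map (adj.unit.app X)).op) (ap (Q.map (adj.counit.app (L.obj X)).op) γ) = γ := by
  rw [← ap_map_comp, ← op_comp, adj.left_triangle_components X]
  exact congrArg (fun g => ap g γ) (Q.map_id _)

lemma box_le
    (hCounit : ∀ (Y : D) (β : Q.obj (op Y)),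
      ap (lam.app (op (R.obj Y))) (ap (rho.app (op Y)) β) ≤ ap (Q.map (adj.counit.app Y).op) β)
    (X : C) (γ : Q.obj (op (L.obj X))) :
    box adj lam rho X γ ≤ γ :=
  calc box adj lam rho X γ
      ≤ ap (Q.map (L.map (adj.unit.app X)).op) (ap (Q.map (adj.counit.app (L.obj X)).op) γ) := by
        rw [box_eq_map_unit_counit]
        exact (ap _).monotone (hCounit (L.obj X) γ)
    _ = γ := map_unit_map_counit adj X γ

lemma box_le_box_box
    (hUnit : ∀ (X : C) (α : P.obj (op X)),
      α ≤ ap (P.map (adj.unit.app X).op)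
            (ap (rho.app (op (L.obj X))) (ap (lam.app (op X)) α)))
    (X : C) (γ : Q.obj (op (L.obj X))) :
    box adj lam rho X γ ≤ box adj lam rho X (box adj lam rho X γ) :=
  (ap (lam.app (op X))).monotone (hUnit X _)

end DoctrineAdjunction

/-- Given an adjunction in the 2-category of doctrines, the operator
`◻_X γ = λ_X (P(η_X) (ρ_{L X} γ))` is an interior operator on the doctrine `L.op ⋙ Q`:
it is natural, deflationary and idempotent-increasing. -/
theorem adjunction_of_doctrines_gives_interior_operator
    {C D : Type*} [Category C] [Category D]
    (P : Cᵒᵖ ⥤ PartOrd) (Q : Dᵒᵖ ⥤ PartOrd)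
    (L : C ⥤ D) (R : D ⥤ C) (adj : L ⊣ R)
    (lam : P ⟶ L.op ⋙ Q) (rho : Q ⟶ R.op ⋙ P)
    (hUnit : ∀ (X : C) (α : P.obj (op X)),
      α ≤ ap (P.map (adj.unit.app X).op)
            (ap (rho.app (op (L.obj X))) (ap (lam.app (op X)) α)))
    (hCounit : ∀ (Y : D) (β : Q.obj (op Y)),
      ap (lam.app (op (R.obj Y))) (ap (rho.app (op Y)) β) ≤ ap (Q.map (adj.counit.app Y).op) β)
    (box : ∀ (X : C), Q.obj (op (L.obj X)) → Q.obj (op (L.obj X)))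
    (hbox : ∀ (X : C) (γ : Q.obj (op (L.obj X))),
      box X γ = ap (lam.app (op X)) (ap (P.map (adj.unit.app X).op)
                  (ap (rho.app (op (L.obj X))) γ))) :
    (∀ {X' X : C} (f : X' ⟶ X) (γ : Q.obj (op (L.obj X))),
        ap (Q.map (L.map f).op) (box X γ) = box X' (ap (Q.map (L.map f).op) γ)) ∧
    (∀ (X : C) (γ : Q.obj (op (L.obj X))), box X γ ≤ γ) ∧
    (∀ (X : C) (γ : Q.obj (op (L.obj X))), box X γ ≤ box X (box X γ)) := by
  obtain rfl : box = fun X γ => DoctrineAdjunction.box adj lam rho X γ := by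
    funext X γ
    exact hbox X γ
  exact ⟨DoctrineAdjunction.map_box adj lam rho, DoctrineAdjunction.box_le adj lam rho hCounit,
    DoctrineAdjunction.box_le_box_box adj lam rho hUnit⟩
end

section
/- Let (K, ν, μ, κ) be a comonad on a doctrine P : Cᵒᵖ ⥤ PartOrd. Then for every coalgebra (A, a : A ⟶ K A) of K, the map ◻_{(A,a)} : P(A) → P(A) defined by ◻_{(A,a)} α = P(a)(κ_A α) satisfies: (a) ◻_{(A,a)} α ≤ α for all α ∈ P(A); (b) ◻_{(A,a)} α ≤ ◻_{(A,a)}(◻_{(A,a)} α) for all α ∈ P(A); and (c) naturality over the category of coalgebras: for every coalgebra morphism f : (A,a) ⟶ (B,b) and every β ∈ P(B), P(f)(◻_{(B,b)} β) = ◻_{(A,a)}(P(f)(β)). -/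
/-! Each of the three properties is one coalgebra law read through the functor `P`: the counit
law `a ≫ ν = 𝟙` gives deflation, the coassociativity law `a ≫ μ = a ≫ K a` together with
naturality of `κ` along `a` gives `◻ ≤ ◻◻`, and `a ≫ K f = f ≫ b` together with naturality of `κ`
along `f` gives naturality of `◻`. -/

open CategoryTheory Opposite

section Doctrine

variable {C : Type*} [Category C] (P : Cᵒᵖ ⥤ PartOrd)

lemma ap_map_op_comp {X Y Z : C} (g : X ⟶ Y) (h : Y ⟶ Z) (x : P.obj (op Z)) :
    ap (P.map (g ≫ h).op) x = ap (P.map g.op) (ap (P.map h.op) x) := by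
  rw [op_comp, P.map_comp]
  rfl

lemma ap_map_op_id {X : C} (x : P.obj (op X)) : ap (P.map (𝟙 X).op) x = x := by
  rw [op_id, P.map_id]
  rfl

variable {P} {K : C ⥤ C} (kap : P ⟶ K.op ⋙ P)

lemma ap_app_ap_map_op {X Y : C} (f : X ⟶ Y) (α : P.obj (op Y)) :
    ap (kap.app (op X)) (ap (P.map f.op) α) = ap (P.map (K.map f).op) (ap (kap.app (op Y)) α) :=
  congrArg (fun g => ap g α) (kap.naturality f.op)

end Doctrine

namespace Comonad.Coalgebra

variable {C : Type*} [Category C] {P : Cᵒᵖ ⥤ PartOrd} {K : Comonad C}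
  (kap : P ⟶ (K : C ⥤ C).op ⋙ P)

def interior (A : K.Coalgebra) (α : P.obj (op A.A)) : P.obj (op A.A) :=
  ap (P.map A.a.op) (ap (kap.app (op A.A)) α)

lemma interior_le
    (hcounit : ∀ (X : C) (α : P.obj (op X)),
      ap (kap.app (op X)) α ≤ ap (P.map (K.ε.app X).op) α)
    (A : K.Coalgebra) (α : P.obj (op A.A)) : interior kap A α ≤ α :=
  calc interior kap A α
      ≤ ap (P.map A.a.op) (ap (P.map (K.ε.app A.A).op) α) :=
        (ap (P.map A.a.op)).monotone (hcounit A.A α)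
    _ = α := by rw [← ap_map_op_comp, A.counit, ap_map_op_id]

lemma interior_le_interior_interior
    (hcomult : ∀ (X : C) (α : P.obj (op X)),
      ap (kap.app (op X)) α ≤
        ap (P.map (K.δ.app X).op)
          (ap (kap.app (op ((K : C ⥤ C).obj X))) (ap (kap.app (op X)) α)))
    (A : K.Coalgebra) (α : P.obj (op A.A)) :
    interior kap A α ≤ interior kap A (interior kap A α) :=
  calc interior kap A α
      ≤ ap (P.map A.a.op) (ap (P.map (K.δ.app A.A).op)
          (ap (kap.app (op ((K : C ⥤ C).obj A.A))) (ap (kap.app (op A.A)) α))) :=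
        (ap (P.map A.a.op)).monotone (hcomult A.A α)
    _ = interior kap A (interior kap A α) := by
      rw [interior, interior, ap_app_ap_map_op, ← ap_map_op_comp, ← ap_map_op_comp, A.coassoc]

lemma map_interior {A B : K.Coalgebra} (f : A ⟶ B) (β : P.obj (op B.A)) :
    ap (P.map f.f.op) (interior kap B β) = interior kap A (ap (P.map f.f.op) β) := by
  rw [interior, interior, ap_app_ap_map_op, ← ap_map_op_comp, ← ap_map_op_comp, f.h]

end Comonad.Coalgebra

open Comonad.Coalgebra in
/-- Given a comonad `(K, ν, μ, κ)` on a doctrine `P`, for every coalgebra `(A, a)` the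
operator `α ↦ P(a)(κ_A α)` is deflationary, below its square, and natural with respect to
coalgebra morphisms: it is an interior operator on the doctrine over the Eilenberg-Moore
category of coalgebras. -/
theorem comonad_on_doctrine_gives_interior_operator_on_coalgebras
    {C : Type*} [Category C] (P : Cᵒᵖ ⥤ PartOrd) (K : Comonad C)
    (kap : P ⟶ (K : C ⥤ C).op ⋙ P)
    (hcounit : ∀ (X : C) (α : P.obj (op X)),
      ap (kap.app (op X)) α ≤ ap (P.map (K.ε.app X).op) α)
    (hcomult : ∀ (X : C) (α : P.obj (op X)),
      ap (kap.app (op X)) α ≤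
        ap (P.map (K.δ.app X).op)
          (ap (kap.app (op ((K : C ⥤ C).obj X))) (ap (kap.app (op X)) α)))
    (box : ∀ (A : K.Coalgebra), P.obj (op A.A) → P.obj (op A.A))
    (hbox : ∀ (A : K.Coalgebra) (α : P.obj (op A.A)),
      box A α = ap (P.map A.a.op) (ap (kap.app (op A.A)) α)) :
    (∀ (A : K.Coalgebra) (α : P.obj (op A.A)), box A α ≤ α) ∧
    (∀ (A : K.Coalgebra) (α : P.obj (op A.A)), box A α ≤ box A (box A α)) ∧
    (∀ (A B : K.Coalgebra) (f : A ⟶ B) (β : P.obj (op B.A)),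
      ap (P.map f.f.op) (box B β) = box A (ap (P.map f.f.op) β)) := by
  obtain rfl : box = interior kap := funext fun A => funext (hbox A)
  exact ⟨interior_le kap hcounit, interior_le_interior_interior kap hcomult,
    fun _ _ => map_interior kap⟩
end

section
/- Let Q be a commutative unital quantale, R_Q = {x : Q | x ≤ 1 ∧ x ≤ x * x}, and define r : Q → Q by r x = sSup {y | y ∈ R_Q ∧ y ≤ x}. Then: (a) r x ∈ R_Q for every x; and (b) r is right adjoint to the inclusion of R_Q into Q, i.e. for every y ∈ R_Q and every x : Q, y ≤ r x if and only if y ≤ x. -/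
/-! Since multiplication is monotone, `R_Q` is closed under arbitrary joins; hence the join of the
elements of `R_Q` below `x` is itself the largest element of `R_Q` below `x`. -/

theorem sSup_le_mul_self_sSup {α : Type*} [Mul α] [CompleteLattice α] [MulLeftMono α]
    [MulRightMono α] {S : Set α} (hS : ∀ y ∈ S, y ≤ y * y) : sSup S ≤ sSup S * sSup S :=
  sSup_le fun y hy => (hS y hy).trans (mul_le_mul' (le_sSup hy) (le_sSup hy))

theorem sSup_mem_setOf_le_one_le_mul_self {α : Type*} [MulOneClass α] [CompleteLattice α]
    [MulLeftMono α] [MulRightMono α] {S : Set α} (hS : S ⊆ {z : α | z ≤ 1 ∧ z ≤ z * z}) :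
    sSup S ∈ {z : α | z ≤ 1 ∧ z ≤ z * z} :=
  ⟨sSup_le fun _ hy => (hS hy).1, sSup_le_mul_self_sSup fun _ hy => (hS hy).2⟩

theorem le_sSup_setOf_mem_and_le_iff {α : Type*} [CompleteLattice α] {R : Set α} {y : α}
    (hy : y ∈ R) (x : α) : y ≤ sSup {z | z ∈ R ∧ z ≤ x} ↔ y ≤ x :=
  ⟨fun h => h.trans (sSup_le fun _ hz => hz.2), fun h => le_sSup ⟨hy, h⟩⟩

/-- In a commutative unital quantale `Q`, the map `r x = sSup {y | y ∈ R_Q ∧ y ≤ x}` lands in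
`R_Q` and is right adjoint to the inclusion of `R_Q` into `Q`. -/
theorem quantale_r_right_adjoint_to_inclusion
    {Q : Type*} [CommMonoid Q] [CompleteLattice Q] [IsQuantale Q]
    (r : Q → Q)
    (hr : ∀ x : Q, r x = sSup {y : Q | y ∈ {z : Q | z ≤ 1 ∧ z ≤ z * z} ∧ y ≤ x}) :
    (∀ x : Q, r x ∈ {z : Q | z ≤ 1 ∧ z ≤ z * z}) ∧
    (∀ y : Q, y ∈ {z : Q | z ≤ 1 ∧ z ≤ z * z} → ∀ x : Q, (y ≤ r x ↔ y ≤ x)) := by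
  refine ⟨fun x => ?_, fun y hy x => ?_⟩
  · rw [hr x]
    exact sSup_mem_setOf_le_one_le_mul_self fun _ hz => hz.1
  · rw [hr x]
    exact le_sSup_setOf_mem_and_le_iff hy x
end

section
/- Let Q be a commutative unital quantale and define the linear exponential modality ! : Q → Q by !x = sSup {y | (y ≤ 1 ∧ y ≤ y * y) ∧ y ≤ x}. Then for all x, y : Q: (a) !x ≤ x; (b) !(!x) = !x (in particular !x ≤ !(!x)); (c) ! is monotone; (d) !x ≤ 1; (e) !x ≤ !x * !x; (f) 1 ≤ !1; and (g) !x * !y ≤ !(x * y). -/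
/-! `!x` is the greatest element of `R_Q` below `x`: `R_Q` contains `1`, is closed under
multiplication and (by monotonicity of `*`) under arbitrary joins, so it contains
`!x`. Every law is then either "`!x ∈ R_Q` and `!x ≤ x`" or "an element of `R_Q` below the
argument lies below its `!`". -/

namespace Quantale

variable {Q : Type*}

/-- Weakening `y ≤ 1` and contraction `y ≤ y * y`; these elements form the set `R_Q`. -/
def IsDuplicable [Mul Q] [One Q] [LE Q] (y : Q) : Prop :=
  y ≤ 1 ∧ y ≤ y * y

theorem isDuplicable_one [MulOneClass Q] [Preorder Q] : IsDuplicable (1 : Q) :=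
  ⟨le_rfl, (one_mul 1).ge⟩

theorem IsDuplicable.mul [CommMonoid Q] [Preorder Q] [MulLeftMono Q] [MulRightMono Q]
    {a b : Q} (ha : IsDuplicable a) (hb : IsDuplicable b) : IsDuplicable (a * b) := by
  refine ⟨mul_le_one' ha.1 hb.1, ?_⟩
  calc a * b ≤ (a * a) * (b * b) := mul_le_mul' ha.2 hb.2
    _ = (a * b) * (a * b) := mul_mul_mul_comm a a b b

section Bang

variable [Mul Q] [One Q] [CompleteLattice Q]

def bang (x : Q) : Q :=
  sSup {y | IsDuplicable y ∧ y ≤ x}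

theorem le_bang {x y : Q} (hy : IsDuplicable y) (hyx : y ≤ x) : y ≤ bang x :=
  le_sSup ⟨hy, hyx⟩

theorem bang_le_self (x : Q) : bang x ≤ x :=
  sSup_le fun _ hy => hy.2

theorem bang_le_one (x : Q) : bang x ≤ 1 :=
  sSup_le fun _ hy => hy.1.1

theorem bang_mono : Monotone (bang : Q → Q) :=
  fun _ _ hab => sSup_le fun _ hy => le_bang hy.1 (hy.2.trans hab)

theorem le_bang_mul_bang [MulLeftMono Q] [MulRightMono Q] (x : Q) :
    bang x ≤ bang x * bang x :=
  sSup_le fun _ hy => hy.1.2.trans (mul_le_mul' (le_sSup hy) (le_sSup hy))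

theorem isDuplicable_bang [MulLeftMono Q] [MulRightMono Q] (x : Q) : IsDuplicable (bang x) :=
  ⟨bang_le_one x, le_bang_mul_bang x⟩

theorem bang_bang [MulLeftMono Q] [MulRightMono Q] (x : Q) : bang (bang x) = bang x :=
  (bang_le_self _).antisymm (le_bang (isDuplicable_bang x) le_rfl)

end Bang

theorem one_le_bang_one [MulOneClass Q] [CompleteLattice Q] : (1 : Q) ≤ bang 1 :=
  le_bang isDuplicable_one le_rfl

theorem bang_mul_bang_le [CommMonoid Q] [CompleteLattice Q] [MulLeftMono Q] [MulRightMono Q]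
    (x y : Q) : bang x * bang y ≤ bang (x * y) :=
  le_bang ((isDuplicable_bang x).mul (isDuplicable_bang y))
    (mul_le_mul' (bang_le_self x) (bang_le_self y))

end Quantale

/-- In a commutative unital quantale `Q`, the linear exponential modality
`!x = sSup {y | (y ≤ 1 ∧ y ≤ y * y) ∧ y ≤ x}` is a monotone interior operator that is
idempotent and satisfies the characteristic "bang" laws. -/
theorem quantale_bang_modality
    {Q : Type*} [CommMonoid Q] [CompleteLattice Q] [IsQuantale Q]
    (bang : Q → Q)
    (hbang : ∀ x : Q, bang x = sSup {y : Q | (y ≤ 1 ∧ y ≤ y * y) ∧ y ≤ x}) :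
    (∀ x : Q, bang x ≤ x) ∧
    (∀ x : Q, bang (bang x) = bang x) ∧
    Monotone bang ∧
    (∀ x : Q, bang x ≤ 1) ∧
    (∀ x : Q, bang x ≤ bang x * bang x) ∧
    ((1 : Q) ≤ bang 1) ∧
    (∀ x y : Q, bang x * bang y ≤ bang (x * y)) := by
  obtain rfl : bang = Quantale.bang := funext hbang
  exact ⟨Quantale.bang_le_self, Quantale.bang_bang, Quantale.bang_mono, Quantale.bang_le_one,
    Quantale.le_bang_mul_bang, Quantale.one_le_bang_one, Quantale.bang_mul_bang_le⟩
end
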